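/- (Competitive screening.) Under the stated assumptions on ψ_L, ψ_H, c_L, c_H, θ_L, θ_H, a Pareto-optimal separating set exists, and every Pareto-optimal separating set involves costly screening: its costly-activity levels satisfy (y_L, y_H) ≠ (0, 0). -/

import Mathlib

open Set

noncomputable section

/-- Type `i`'s worker payoff from an offer `(x, y, w)`: `w − ψ_i(x) − c_i(y)`. -/
def WPayoff (ψ c : ℝ → ℝ) (o : ℝ × ℝ × ℝ) : ℝ := o.2.2 - ψ o.1 - c o.2.1

/-- A separating set: a pair of distinct offers in `[0,1] × [0,1] × ℝ` such that each
type weakly prefers its own offer and each offer earns the firm zero profit. -/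
def SepSet (θL θH : ℝ) (ψL ψH cL cH : ℝ → ℝ) (oL oH : ℝ × ℝ × ℝ) : Prop :=
  oL.1 ∈ Icc (0 : ℝ) 1 ∧ oL.2.1 ∈ Icc (0 : ℝ) 1 ∧
  oH.1 ∈ Icc (0 : ℝ) 1 ∧ oH.2.1 ∈ Icc (0 : ℝ) 1 ∧
  oL ≠ oH ∧
  WPayoff ψL cL oL ≥ WPayoff ψL cL oH ∧
  WPayoff ψH cH oH ≥ WPayoff ψH cH oL ∧
  oL.2.2 = θL * oL.1 ∧ oH.2.2 = θH * oH.1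

/-- A Pareto-optimal separating set: no other separating set gives each type a weakly
higher worker payoff and some type a strictly higher one. -/
def ParetoOptSep (θL θH : ℝ) (ψL ψH cL cH : ℝ → ℝ) (oL oH : ℝ × ℝ × ℝ) : Prop :=
  SepSet θL θH ψL ψH cL cH oL oH ∧
    ¬ ∃ oL' oH' : ℝ × ℝ × ℝ, SepSet θL θH ψL ψH cL cH oL' oH' ∧
      WPayoff ψL cL oL' ≥ WPayoff ψL cL oL ∧
      WPayoff ψH cH oH' ≥ WPayoff ψH cH oH ∧
      (WPayoff ψL cL oL' > WPayoff ψL cL oL ∨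
        WPayoff ψH cH oH' > WPayoff ψH cH oH)

/-!
Existence: the incentive-compatible menus of zero-profit offers, pooling ones included, form a
compact set, so total welfare attains its maximum on it. The work-only menu in which the low type
is indifferent between the two offers has positive welfare, while pooling menus have nonpositive
welfare; hence the maximizer separates, and a welfare maximizer is Pareto-optimal.

Costly screening: if neither offer uses the costly activity, the low type's incentive constraint
and adverse selection force the high type's work level away from its efficient level. Moving it
slightly towards efficiency while adding a little of the activity, which is free to first order
for the high type (`c'_H(0) = 0`) but not for the low type, raises the high type's payoff without
tempting the low type: a Pareto improvement.
-/

lemma ConvexOn.isMaxOn_of_hasDerivWithinAt {S : Set ℝ} {f : ℝ → ℝ} {θ x₀ : ℝ}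
    (hf : ConvexOn ℝ S f) (hx₀ : x₀ ∈ S) (hd : HasDerivWithinAt f θ S x₀) :
    IsMaxOn (fun x => θ * x - f x) S x₀ := by
  refine isMaxOn_iff.2 fun x hx => ?_
  rcases lt_trichotomy x x₀ with h | rfl | h
  · have := hf.slope_le_of_hasDerivWithinAt hx hx₀ h hd
    rw [slope_def_field, div_le_iff₀ (sub_pos.2 h)] at this
    linarith
  · exact le_rfl
  · have := hf.le_slope_of_hasDerivWithinAt hx₀ hx h hd
    rw [slope_def_field, le_div_iff₀ (sub_pos.2 h)] at this
    linarith

lemma StrictConvexOn.lt_of_hasDerivWithinAt {S : Set ℝ} {f : ℝ → ℝ} {a b fa fb : ℝ}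
    (hf : StrictConvexOn ℝ S f) (ha : a ∈ S) (hb : b ∈ S) (hab : a < b)
    (hfa : HasDerivWithinAt f fa S a) (hfb : HasDerivWithinAt f fb S b) : fa < fb :=
  (hf.lt_slope_of_hasDerivWithinAt ha hb hab hfa).trans
    (hf.slope_lt_of_hasDerivWithinAt ha hb hab hfb)

lemma StrictConvexOn.mul_sub_pos_of_hasDerivWithinAt {S : Set ℝ} {f : ℝ → ℝ} {a b fa fb : ℝ}
    (hf : StrictConvexOn ℝ S f) (ha : a ∈ S) (hb : b ∈ S) (hab : a ≠ b)
    (hfa : HasDerivWithinAt f fa S a) (hfb : HasDerivWithinAt f fb S b) :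
    0 < (fb - fa) * (b - a) := by
  rcases hab.lt_or_gt with h | h
  · exact mul_pos (sub_pos.2 (hf.lt_of_hasDerivWithinAt ha hb h hfa hfb)) (sub_pos.2 h)
  · exact mul_pos_of_neg_of_neg (sub_neg.2 (hf.lt_of_hasDerivWithinAt hb ha h hfb hfa))
      (sub_neg.2 h)

lemma strictMonoOn_sub_of_hasDerivWithinAt {a b : ℝ} {f g f' g' : ℝ → ℝ}
    (hf : ∀ x ∈ Icc a b, HasDerivWithinAt f (f' x) (Icc a b) x)
    (hg : ∀ x ∈ Icc a b, HasDerivWithinAt g (g' x) (Icc a b) x)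
    (hlt : ∀ x ∈ Ioo a b, g' x < f' x) :
    StrictMonoOn (fun x => f x - g x) (Icc a b) := by
  refine strictMonoOn_of_hasDerivWithinAt_pos (convex_Icc a b)
    (fun x hx => ((hf x hx).sub (hg x hx)).continuousWithinAt) (f' := fun x => f' x - g' x)
    (fun x hx => ?_) (fun x hx => ?_)
  · rw [interior_Icc] at hx ⊢
    exact ((hf x (Ioo_subset_Icc_self hx)).sub (hg x (Ioo_subset_Icc_self hx))).mono
      Ioo_subset_Icc_self
  · rw [interior_Icc] at hx
    exact sub_pos.2 (hlt x hx)

lemma exists_mem_Ioc_lt_lt_of_hasDerivWithinAt {a b f' g' : ℝ} {f g : ℝ → ℝ} (hab : a < b)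
    (hf : HasDerivWithinAt f f' (Icc a b) a) (hg : HasDerivWithinAt g g' (Icc a b) a)
    (hf' : f' < 0) (hg' : 0 < g') : ∃ t ∈ Ioc a b, f t < f a ∧ g a < g t := by
  have hfs := hf.limsup_slope_le hf'
  have hgs := hg.neg.limsup_slope_le (neg_lt_zero.2 hg')
  rw [Icc_sdiff_left] at hfs hgs
  have := left_nhdsWithin_Ioc_neBot hab
  obtain ⟨t, ⟨hft, hgt⟩, ht⟩ := ((hfs.and hgs).and self_mem_nhdsWithin).exists
  rw [slope_def_field, div_lt_iff₀ (sub_pos.2 ht.1)] at hft hgt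
  refine ⟨t, ht, ?_, ?_⟩ <;> simp only [Pi.neg_apply] at hgt <;> linarith

lemma exists_screening_perturbation {θ x z dψL dψH dcL : ℝ} {ψL ψH cL cH : ℝ → ℝ}
    (hx : x ∈ Icc (0 : ℝ) 1) (hz : z ∈ Icc (0 : ℝ) 1)
    (hψL : HasDerivWithinAt ψL dψL (Icc 0 1) x) (hψH : HasDerivWithinAt ψH dψH (Icc 0 1) x)
    (hcL : HasDerivWithinAt cL dcL (Icc 0 1) 0) (hcH : HasDerivWithinAt cH 0 (Icc 0 1) 0)
    (hdcL : 0 < dcL) (hgain : 0 < (θ - dψH) * (z - x)) :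
    ∃ x' ∈ Icc (0 : ℝ) 1, ∃ y ∈ Ioc (0 : ℝ) 1,
      θ * x' - ψL x' - cL y < θ * x - ψL x - cL 0 ∧
      θ * x - ψH x - cH 0 < θ * x' - ψH x' - cH y := by
  -- Along `t ↦ (x + r t (z - x), t)` the high type gains `r (θ - dψH) (z - x) > 0` to first
  -- order, while by the choice of `r` the low type loses `dcL - r Q > 0`.
  set Q := (θ - dψL) * (z - x)
  set r := dcL / (dcL + |Q|)
  have hQ : 0 < dcL + |Q| := by positivity
  have hr : 0 < r := div_pos hdcL hQ
  have hr1 : r ≤ 1 := (div_le_one hQ).2 (le_add_of_nonneg_right (abs_nonneg Q))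
  have hrQ : r * Q < dcL := by
    calc r * Q ≤ r * |Q| := mul_le_mul_of_nonneg_left (le_abs_self Q) hr.le
      _ < dcL := by
        rw [div_mul_eq_mul_div, div_lt_iff₀ hQ]; nlinarith [abs_nonneg Q]
  set γ : ℝ → ℝ := fun t => x + (r * t) • (z - x)
  have hγ : MapsTo γ (Icc 0 1) (Icc 0 1) := fun t ht =>
    (convex_Icc 0 1).add_smul_sub_mem hx hz
      ⟨mul_nonneg hr.le ht.1, mul_le_one₀ hr1 ht.1 ht.2⟩
  have hγ0 : γ 0 = x := by simp [γ]
  have hγd : HasDerivWithinAt γ (r * 1 * (z - x)) (Icc 0 1) 0 :=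
    (((hasDerivWithinAt_id 0 _).const_mul r).smul_const (z - x)).const_add x
  have hL := ((hγd.const_mul θ).sub (hψL.comp_of_eq 0 hγd hγ hγ0.symm)).sub hcL
  have hH := ((hγd.const_mul θ).sub (hψH.comp_of_eq 0 hγd hγ hγ0.symm)).sub hcH
  obtain ⟨t, ht, hLt, hHt⟩ := exists_mem_Ioc_lt_lt_of_hasDerivWithinAt one_pos hL hH
    (by linarith [show θ * (r * 1 * (z - x)) - dψL * (r * 1 * (z - x)) = r * Q by ring])
    (by nlinarith [mul_pos hr hgain])
  refine ⟨γ t, hγ (Ioc_subset_Icc_self ht), t, ht, ?_, ?_⟩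
  · simpa [hγ0] using hLt
  · simpa [hγ0] using hHt

def zeroProfitOffer (θ : ℝ) (q : ℝ × ℝ) : ℝ × ℝ × ℝ := (q.1, q.2, θ * q.1)

/-- Pooling menus are allowed, which keeps the set of such menus compact. -/
def IsICMenu (θL θH : ℝ) (ψL ψH cL cH : ℝ → ℝ) (q : (ℝ × ℝ) × (ℝ × ℝ)) : Prop :=
  q ∈ (Icc (0 : ℝ) 1 ×ˢ Icc (0 : ℝ) 1) ×ˢ (Icc (0 : ℝ) 1 ×ˢ Icc (0 : ℝ) 1) ∧
  WPayoff ψL cL (zeroProfitOffer θH q.2) ≤ WPayoff ψL cL (zeroProfitOffer θL q.1) ∧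
  WPayoff ψH cH (zeroProfitOffer θL q.1) ≤ WPayoff ψH cH (zeroProfitOffer θH q.2)

def welfare (θL θH : ℝ) (ψL ψH cL cH : ℝ → ℝ) (q : (ℝ × ℝ) × (ℝ × ℝ)) : ℝ :=
  WPayoff ψL cL (zeroProfitOffer θL q.1) + WPayoff ψH cH (zeroProfitOffer θH q.2)

section Screening

variable {θL θH : ℝ} {ψL ψH cL cH : ℝ → ℝ} {oL oH : ℝ × ℝ × ℝ}

@[simp]
lemma wPayoff_zeroProfitOffer (ψ c : ℝ → ℝ) (θ : ℝ) (q : ℝ × ℝ) :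
    WPayoff ψ c (zeroProfitOffer θ q) = θ * q.1 - ψ q.1 - c q.2 := rfl

lemma continuousOn_wPayoff_zeroProfitOffer {α : Type*} [TopologicalSpace α] {ψ c : ℝ → ℝ}
    (hψ : ContinuousOn ψ (Icc 0 1)) (hc : ContinuousOn c (Icc 0 1)) (θ : ℝ) {p : α → ℝ × ℝ}
    {s : Set α} (hp : Continuous p) (hps : MapsTo p s (Icc 0 1 ×ˢ Icc 0 1)) :
    ContinuousOn (fun a => WPayoff ψ c (zeroProfitOffer θ (p a))) s := by
  simp only [wPayoff_zeroProfitOffer]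
  exact ((continuousOn_const.mul (hp.fst.continuousOn)).sub
    (hψ.comp hp.fst.continuousOn fun a ha => (hps ha).1)).sub
    (hc.comp hp.snd.continuousOn fun a ha => (hps ha).2)

lemma SepSet.zeroProfitOffer_fst (h : SepSet θL θH ψL ψH cL cH oL oH) :
    zeroProfitOffer θL (oL.1, oL.2.1) = oL :=
  Prod.ext rfl (Prod.ext rfl h.2.2.2.2.2.2.2.1.symm)

lemma SepSet.zeroProfitOffer_snd (h : SepSet θL θH ψL ψH cL cH oL oH) :
    zeroProfitOffer θH (oH.1, oH.2.1) = oH :=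
  Prod.ext rfl (Prod.ext rfl h.2.2.2.2.2.2.2.2.symm)

lemma SepSet.isICMenu (h : SepSet θL θH ψL ψH cL cH oL oH) :
    IsICMenu θL θH ψL ψH cL cH ((oL.1, oL.2.1), (oH.1, oH.2.1)) := by
  rw [← h.zeroProfitOffer_fst, ← h.zeroProfitOffer_snd] at h
  obtain ⟨hxL, hyL, hxH, hyH, -, hICL, hICH, -⟩ := h
  exact ⟨⟨⟨hxL, hyL⟩, hxH, hyH⟩, hICL, hICH⟩

lemma SepSet.welfare_eq (h : SepSet θL θH ψL ψH cL cH oL oH) :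
    welfare θL θH ψL ψH cL cH ((oL.1, oL.2.1), (oH.1, oH.2.1)) =
      WPayoff ψL cL oL + WPayoff ψH cH oH := by
  rw [welfare, h.zeroProfitOffer_fst, h.zeroProfitOffer_snd]

lemma IsICMenu.sepSet {q : (ℝ × ℝ) × (ℝ × ℝ)} (hq : IsICMenu θL θH ψL ψH cL cH q)
    (hne : zeroProfitOffer θL q.1 ≠ zeroProfitOffer θH q.2) :
    SepSet θL θH ψL ψH cL cH (zeroProfitOffer θL q.1) (zeroProfitOffer θH q.2) :=
  ⟨hq.1.1.1, hq.1.1.2, hq.1.2.1, hq.1.2.2, hne, hq.2.1, hq.2.2, rfl, rfl⟩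

lemma isCompact_setOf_isICMenu (hψL : ContinuousOn ψL (Icc 0 1))
    (hψH : ContinuousOn ψH (Icc 0 1)) (hcL : ContinuousOn cL (Icc 0 1))
    (hcH : ContinuousOn cH (Icc 0 1)) :
    IsCompact {q | IsICMenu θL θH ψL ψH cL cH q} := by
  set B := (Icc (0 : ℝ) 1 ×ˢ Icc (0 : ℝ) 1) ×ˢ (Icc (0 : ℝ) 1 ×ˢ Icc (0 : ℝ) 1)
  have hB : IsCompact B :=
    (isCompact_Icc.prod isCompact_Icc).prod (isCompact_Icc.prod isCompact_Icc)
  have hL := hB.isClosed.isClosed_le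
    (continuousOn_wPayoff_zeroProfitOffer hψL hcL θH continuous_snd fun q hq => hq.2)
    (continuousOn_wPayoff_zeroProfitOffer hψL hcL θL continuous_fst fun q hq => hq.1)
  have hH := hB.isClosed.isClosed_le
    (continuousOn_wPayoff_zeroProfitOffer hψH hcH θL continuous_fst fun q hq => hq.1)
    (continuousOn_wPayoff_zeroProfitOffer hψH hcH θH continuous_snd fun q hq => hq.2)
  refine hB.of_isClosed_subset ?_ fun q hq => hq.1
  convert hL.inter hH using 1
  ext q
  simp only [IsICMenu, mem_ofPred_eq, mem_inter_iff]
  tauto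

lemma welfare_nonpos_of_pooling (hθ : θL ≠ θH) (hψL0 : ψL 0 = 0) (hψH0 : ψH 0 = 0)
    (hcL : ∀ y ∈ Icc (0 : ℝ) 1, 0 ≤ cL y) (hcH : ∀ y ∈ Icc (0 : ℝ) 1, 0 ≤ cH y)
    {q : (ℝ × ℝ) × (ℝ × ℝ)} (hy : q.1.2 ∈ Icc (0 : ℝ) 1)
    (hpool : zeroProfitOffer θL q.1 = zeroProfitOffer θH q.2) :
    welfare θL θH ψL ψH cL cH q ≤ 0 := by
  simp only [zeroProfitOffer, Prod.mk.injEq] at hpool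
  obtain ⟨hx, hy', hw⟩ := hpool
  have hx0 : q.1.1 = 0 := by
    rw [← hx] at hw
    exact (mul_eq_zero.1 (by linarith : (θL - θH) * q.1.1 = 0)).resolve_left (sub_ne_zero.2 hθ)
  have := hcL _ hy
  have := hcH _ hy
  simp only [welfare, wPayoff_zeroProfitOffer, ← hx, ← hy', hx0, hψL0, hψH0]
  linarith

lemma paretoOptSep_of_forall_sepSet_le (h : SepSet θL θH ψL ψH cL cH oL oH)
    (hmax : ∀ oL' oH', SepSet θL θH ψL ψH cL cH oL' oH' →
      WPayoff ψL cL oL' + WPayoff ψH cH oH' ≤ WPayoff ψL cL oL + WPayoff ψH cH oH) :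
    ParetoOptSep θL θH ψL ψH cL cH oL oH := by
  refine ⟨h, fun ⟨oL', oH', hs, hL, hH, hlt⟩ => ?_⟩
  have := hmax oL' oH' hs
  rcases hlt with hlt | hlt <;> linarith

theorem exists_paretoOptSep_of_welfare_pos (hθ : θL ≠ θH)
    (hψL : ContinuousOn ψL (Icc 0 1)) (hψH : ContinuousOn ψH (Icc 0 1))
    (hcL : ContinuousOn cL (Icc 0 1)) (hcH : ContinuousOn cH (Icc 0 1))
    (hψL0 : ψL 0 = 0) (hψH0 : ψH 0 = 0)
    (hcL_nonneg : ∀ y ∈ Icc (0 : ℝ) 1, 0 ≤ cL y) (hcH_nonneg : ∀ y ∈ Icc (0 : ℝ) 1, 0 ≤ cH y)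
    {q₀ : (ℝ × ℝ) × (ℝ × ℝ)} (hq₀ : IsICMenu θL θH ψL ψH cL cH q₀)
    (hpos : 0 < welfare θL θH ψL ψH cL cH q₀) :
    ∃ oL oH, ParetoOptSep θL θH ψL ψH cL cH oL oH := by
  have hcont : ContinuousOn (welfare θL θH ψL ψH cL cH) {q | IsICMenu θL θH ψL ψH cL cH q} :=
    (continuousOn_wPayoff_zeroProfitOffer hψL hcL θL continuous_fst fun q hq => hq.1.1).add
      (continuousOn_wPayoff_zeroProfitOffer hψH hcH θH continuous_snd fun q hq => hq.1.2)
  obtain ⟨q, hq, hmax⟩ :=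
    (isCompact_setOf_isICMenu hψL hψH hcL hcH).exists_isMaxOn ⟨q₀, hq₀⟩ hcont
  have hsep : SepSet θL θH ψL ψH cL cH (zeroProfitOffer θL q.1) (zeroProfitOffer θH q.2) :=
    hq.sepSet fun hpool => by
      have := welfare_nonpos_of_pooling hθ hψL0 hψH0 hcL_nonneg hcH_nonneg hq.1.1.2 hpool
      linarith [isMaxOn_iff.1 hmax q₀ hq₀]
  refine ⟨_, _, paretoOptSep_of_forall_sepSet_le hsep fun oL' oH' hs => ?_⟩
  rw [← hs.welfare_eq]
  exact isMaxOn_iff.1 hmax _ hs.isICMenu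

/-- The witness is the work-only menu `((xL, 0), (xb, 0))` with `xb ∈ [xL, x₀]` making the low
type indifferent; since `ψL - ψH` increases, the high type then prefers its own offer. -/
lemma exists_isICMenu_welfare_pos (hθ : θL < θH) (hψL : ContinuousOn ψL (Icc 0 1))
    (hsc : StrictMonoOn (fun x => ψL x - ψH x) (Icc 0 1)) (hψL0 : ψL 0 = 0) (hψH0 : ψH 0 = 0)
    (hcL0 : cL 0 = 0) (hcH0 : cH 0 = 0) {xL x₀ : ℝ} (hxL : xL ∈ Ioc (0 : ℝ) 1)
    (huL : 0 ≤ θL * xL - ψL xL) (hx₀ : xL ≤ x₀) (hx₀1 : x₀ ≤ 1)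
    (hsep : θH * x₀ - ψL x₀ ≤ θL * xL - ψL xL) :
    ∃ q, IsICMenu θL θH ψL ψH cL cH q ∧ 0 < welfare θL θH ψL ψH cL cH q := by
  have hxL' : xL ∈ Icc (0 : ℝ) 1 := Ioc_subset_Icc_self hxL
  obtain ⟨xb, hxb, hxbL⟩ : ∃ xb ∈ Icc xL x₀, θH * xb - ψL xb = θL * xL - ψL xL := by
    refine intermediate_value_Icc' (f := fun x => θH * x - ψL x) hx₀
      ((continuousOn_const.mul continuousOn_id).sub (hψL.mono (Icc_subset_Icc hxL'.1 hx₀1)))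
      ⟨hsep, ?_⟩
    nlinarith [hxL.1]
  have hxb' : xb ∈ Icc (0 : ℝ) 1 := ⟨hxL.1.le.trans hxb.1, hxb.2.trans hx₀1⟩
  have hxbH : ψL xL - ψH xL ≤ ψL xb - ψH xb := hsc.monotoneOn hxL' hxb' hxb.1
  have hxLpos : ψL 0 - ψH 0 < ψL xL - ψH xL := hsc ⟨le_rfl, zero_le_one⟩ hxL' hxL.1
  refine ⟨((xL, 0), (xb, 0)),
    ⟨⟨⟨hxL', le_rfl, zero_le_one⟩, hxb', le_rfl, zero_le_one⟩, ?_, ?_⟩, ?_⟩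
  all_goals simp only [welfare, wPayoff_zeroProfitOffer, hcL0, hcH0]; linarith

lemma ParetoOptSep.wPayoff_le_of_zeroProfitOffer (h : ParetoOptSep θL θH ψL ψH cL cH oL oH)
    {q : ℝ × ℝ} (hq : q ∈ Icc (0 : ℝ) 1 ×ˢ Icc (0 : ℝ) 1) (hne : oL ≠ zeroProfitOffer θH q)
    (hL : WPayoff ψL cL (zeroProfitOffer θH q) ≤ WPayoff ψL cL oH) :
    WPayoff ψH cH (zeroProfitOffer θH q) ≤ WPayoff ψH cH oH := by
  obtain ⟨⟨hxL, hyL, -, -, -, hICL, hICH, hwL, -⟩, hPO⟩ := h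
  by_contra! hlt
  exact hPO ⟨oL, zeroProfitOffer θH q,
    ⟨hxL, hyL, hq.1, hq.2, hne, hL.trans hICL, hICH.trans hlt.le, hwL, rfl⟩,
    le_rfl, hlt.le, Or.inr hlt⟩

theorem ParetoOptSep.activity_ne_zero (h : ParetoOptSep θL θH ψL ψH cL cH oL oH)
    {ψL' ψH' : ℝ → ℝ} {xeL xeH dcL : ℝ}
    (hψL : ∀ x ∈ Icc (0 : ℝ) 1, HasDerivWithinAt ψL (ψL' x) (Icc 0 1) x)
    (hψH : ∀ x ∈ Icc (0 : ℝ) 1, HasDerivWithinAt ψH (ψH' x) (Icc 0 1) x)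
    (hψH_conv : StrictConvexOn ℝ (Icc 0 1) ψH)
    (hxeL : IsMaxOn (fun x => θL * x - ψL x) (Icc 0 1) xeL)
    (hxeH : xeH ∈ Icc (0 : ℝ) 1) (hψH'xeH : ψH' xeH = θH)
    (hadv : θL * xeL - ψL xeL < θH * xeH - ψL xeH)
    (hcL : HasDerivWithinAt cL dcL (Icc 0 1) 0) (hcH : HasDerivWithinAt cH 0 (Icc 0 1) 0)
    (hdcL : 0 < dcL) :
    (oL.2.1, oH.2.1) ≠ (0, 0) := by
  intro h0
  obtain ⟨hyL, hyH⟩ := Prod.mk.inj h0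
  have hoL : oL = zeroProfitOffer θL (oL.1, 0) := hyL ▸ h.1.zeroProfitOffer_fst.symm
  have hoH : oH = zeroProfitOffer θH (oH.1, 0) := hyH ▸ h.1.zeroProfitOffer_snd.symm
  obtain ⟨hxL, -, hxH, -, -, hICL, -⟩ := h.1
  have hmimic : θH * oH.1 - ψL oH.1 ≤ θL * xeL - ψL xeL := by
    have := isMaxOn_iff.1 hxeL _ hxL
    rw [hoL, hoH] at hICL
    simp only [wPayoff_zeroProfitOffer] at hICL
    linarith
  have hxH_ne : oH.1 ≠ xeH := by
    rintro hxH_eq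
    rw [hxH_eq] at hmimic
    linarith
  have hgain : 0 < (θH - ψH' oH.1) * (xeH - oH.1) := hψH'xeH ▸
    hψH_conv.mul_sub_pos_of_hasDerivWithinAt hxH hxeH hxH_ne (hψH _ hxH) (hψH _ hxeH)
  obtain ⟨x', hx', y, hy, hLy, hHy⟩ :=
    exists_screening_perturbation hxH hxeH (hψL _ hxH) (hψH _ hxH) hcL hcH hdcL hgain
  have hne : oL ≠ zeroProfitOffer θH (x', y) := by
    rw [hoL]
    simp only [zeroProfitOffer, ne_eq, Prod.mk.injEq, not_and]
    exact fun _ hy0 => absurd hy0 hy.1.ne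
  have := h.wPayoff_le_of_zeroProfitOffer ⟨hx', Ioc_subset_Icc_self hy⟩ hne (by
    rw [hoH]; simp only [wPayoff_zeroProfitOffer]; linarith)
  rw [hoH] at this
  simp only [wPayoff_zeroProfitOffer] at this
  linarith

end Screening

theorem stmt17
    (θL θH : ℝ) (hθL : 0 ≤ θL) (hθLH : θL < θH)
    (ψL ψH ψL' ψH' cL cH cL' cH' : ℝ → ℝ)
    -- ψ_i : strictly increasing, C¹, strictly convex on [0,1], ψ_i(0) = 0
    (hψLderiv : ∀ x ∈ Icc (0 : ℝ) 1, HasDerivWithinAt ψL (ψL' x) (Icc 0 1) x)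
    (hψHderiv : ∀ x ∈ Icc (0 : ℝ) 1, HasDerivWithinAt ψH (ψH' x) (Icc 0 1) x)
    (hψLconv : StrictConvexOn ℝ (Icc 0 1) ψL) (hψHconv : StrictConvexOn ℝ (Icc 0 1) ψH)
    (hψL0 : ψL 0 = 0) (hψH0 : ψH 0 = 0)
    -- the high type has lower marginal cost
    (hmarg : ∀ x ∈ Icc (0 : ℝ) 1, ψH' x < ψL' x)
    -- efficient work levels, interior
    (xeL xeH : ℝ) (hxeL : xeL ∈ Ioo (0 : ℝ) 1) (hxeH : xeH ∈ Ioo (0 : ℝ) 1)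
    (hxeLdef : ψL' xeL = θL) (hxeHdef : ψH' xeH = θH)
    -- adverse selection
    (hadv : θL * xeL - ψL xeL < θH * xeH - ψL xeH)
    -- separation with work allocations alone is possible
    (hsep : ∃ x : ℝ, xeL ≤ x ∧ x ≤ 1 ∧ θL * xeL - ψL xeL ≥ θH * x - ψL x)
    -- c_i : strictly increasing, C¹ on [0,1], c_i(0) = 0
    (hcLmono : StrictMonoOn cL (Icc 0 1)) (hcHmono : StrictMonoOn cH (Icc 0 1))
    (hcLderiv : ∀ y ∈ Icc (0 : ℝ) 1, HasDerivWithinAt cL (cL' y) (Icc 0 1) y)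
    (hcHderiv : ∀ y ∈ Icc (0 : ℝ) 1, HasDerivWithinAt cH (cH' y) (Icc 0 1) y)
    (hcL0 : cL 0 = 0) (hcH0 : cH 0 = 0)
    -- a small amount of the costly signal is cheap for the high type and expensive
    -- for the low type
    (hcL' : cL' 0 > ψL' 1) (hcH' : cH' 0 = 0) :
    (∃ oL oH : ℝ × ℝ × ℝ, ParetoOptSep θL θH ψL ψH cL cH oL oH) ∧
    ∀ oL oH : ℝ × ℝ × ℝ, ParetoOptSep θL θH ψL ψH cL cH oL oH →
      (oL.2.1, oH.2.1) ≠ ((0 : ℝ), (0 : ℝ)) := by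
  have hxeL' := Ioo_subset_Icc_self hxeL
  have hmaxL : IsMaxOn (fun x => θL * x - ψL x) (Icc 0 1) xeL :=
    hψLconv.convexOn.isMaxOn_of_hasDerivWithinAt hxeL' (hxeLdef ▸ hψLderiv xeL hxeL')
  have hcL'0 : 0 < cL' 0 := by
    have := hψLconv.lt_of_hasDerivWithinAt hxeL' ⟨zero_le_one, le_rfl⟩ hxeL.2
      (hψLderiv xeL hxeL') (hψLderiv 1 ⟨zero_le_one, le_rfl⟩)
    linarith
  have hnonneg {c : ℝ → ℝ} (hmono : StrictMonoOn c (Icc 0 1)) (h0 : c 0 = 0) :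
      ∀ y ∈ Icc (0 : ℝ) 1, 0 ≤ c y :=
    fun y hy => h0 ▸ hmono.monotoneOn ⟨le_rfl, zero_le_one⟩ hy hy.1
  have hcont {f f' : ℝ → ℝ} (hf : ∀ x ∈ Icc (0 : ℝ) 1, HasDerivWithinAt f (f' x) (Icc 0 1) x) :
      ContinuousOn f (Icc 0 1) :=
    fun x hx => (hf x hx).continuousWithinAt
  refine ⟨?_, fun oL oH hPO => hPO.activity_ne_zero hψLderiv hψHderiv hψHconv hmaxL
    (Ioo_subset_Icc_self hxeH) hxeHdef hadv (hcLderiv 0 ⟨le_rfl, zero_le_one⟩)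
    (by simpa only [hcH'] using hcHderiv 0 ⟨le_rfl, zero_le_one⟩) hcL'0⟩
  obtain ⟨x₀, hx₀, hx₀1, hsep⟩ := hsep
  obtain ⟨q₀, hq₀, hpos⟩ := exists_isICMenu_welfare_pos hθLH (hcont hψLderiv)
    (strictMonoOn_sub_of_hasDerivWithinAt hψLderiv hψHderiv fun x hx =>
      hmarg x (Ioo_subset_Icc_self hx))
    hψL0 hψH0 hcL0 hcH0 (Ioo_subset_Ioc_self hxeL)
    (by simpa [hψL0] using isMaxOn_iff.1 hmaxL 0 ⟨le_rfl, zero_le_one⟩) hx₀ hx₀1 hsep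
  exact exists_paretoOptSep_of_welfare_pos hθLH.ne (hcont hψLderiv) (hcont hψHderiv)
    (hcont hcLderiv) (hcont hcHderiv) hψL0 hψH0 (hnonneg hcLmono hcL0) (hnonneg hcHmono hcH0)
    hq₀ hpos
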